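/- arXiv:1001.2911 — 3 statements merged into one kernel-verified Lean document; each statement's English description precedes it below -/
import Mathlib

section
/- For every α > 0, log Γ(α) = (α - 1/2)·log α - α + 1 + ∫_1^∞ φ(u)/u du - ∫_0^∞ φ(u)/(u+α) du, where φ(u) = u - ⌊u⌋ - 1/2 (Stirling-type formula for log Γ). -/
/-!
Integrating `φ(u)/(u + c)` explicitly over each `[n, n+1]` and summing gives the first-order
Euler–Maclaurin formula for `∑ log (c + j)`. Applied with `c = α` and `c = 1` inside Euler's limit
`log Γ(α) = lim (α log n + log n! - ∑_{j ≤ n} log (α + j))`, it leaves the two partial integrals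
plus elementary terms tending to `(α - 1/2) log α + 1 - α`. The integrals converge because `φ` has
the bounded continuous primitive `(fract² - fract)/2`: integrating by parts leaves an absolutely
convergent integral against `(u + c)⁻²`.
-/

open Filter Topology Set MeasureTheory intervalIntegral Real

noncomputable def sawtooth (u : ℝ) : ℝ := Int.fract u - 1 / 2

noncomputable def sawtoothPrimitive (u : ℝ) : ℝ := (Int.fract u ^ 2 - Int.fract u) / 2

lemma fract_eq_sub_of_mem_Ico {k : ℤ} {u : ℝ} (h : u ∈ Ico (k : ℝ) (k + 1)) :
    Int.fract u = u - k := by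
  rw [← Int.self_sub_floor, Int.floor_eq_iff.2 h]

lemma sawtooth_eq_of_mem_Ico {k : ℤ} {u : ℝ} (h : u ∈ Ico (k : ℝ) (k + 1)) :
    sawtooth u = u - k - 1 / 2 := by
  rw [sawtooth, fract_eq_sub_of_mem_Ico h]

lemma sawtooth_add_one (u : ℝ) : sawtooth (u + 1) = sawtooth u := by
  rw [sawtooth, sawtooth, Int.fract_add_one]

lemma intervalIntegrable_sawtooth (a b : ℝ) : IntervalIntegrable sawtooth volume a b := by
  have hfloor : Monotone (fun u : ℝ => (⌊u⌋ : ℝ)) := fun x y h => Int.cast_mono (Int.floor_mono h)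
  exact (intervalIntegrable_id.sub hfloor.intervalIntegrable).sub intervalIntegrable_const

lemma intervalIntegrable_sawtooth_div {a b c : ℝ} (ha : 0 < a + c) (hb : 0 < b + c) :
    IntervalIntegrable (fun u => sawtooth u / (u + c)) volume a b := by
  have hne : ∀ u ∈ uIcc a b, u + c ≠ 0 := fun u hu => by
    have : 0 < min a b + c := by rcases min_cases a b with h | h <;> linarith
    linarith [hu.1]
  have hinv : ContinuousOn (fun u => (u + c)⁻¹) (uIcc a b) :=
    (continuousOn_id.add continuousOn_const).inv₀ hne
  simpa only [div_eq_mul_inv] using (intervalIntegrable_sawtooth a b).mul_continuousOn hinv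

lemma integral_sawtooth_div_unit {c : ℝ} {n : ℕ} (hc : 0 < c + n) :
    ∫ u in (n : ℝ)..n + 1, sawtooth u / (u + c)
      = 1 - (c + n + 1 / 2) * (log (c + (n + 1)) - log (c + n)) := by
  have hG : ∀ u ∈ Icc (n : ℝ) (n + 1), HasDerivAt (fun u => u - (c + n + 1 / 2) * log (c + u))
      ((u - n - 1 / 2) / (u + c)) u := fun u hu => by
    have hu : 0 < u + c := by linarith [hu.1]
    have hu' : c + u ≠ 0 := by linarith
    refine ((hasDerivAt_id' u).sub ((((hasDerivAt_id' u).const_add c).log hu').const_mul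
      (c + n + 1 / 2))).congr_deriv ?_
    field_simp
    ring
  have hsaw : ∀ u ∈ Ioo (n : ℝ) (n + 1), sawtooth u = u - n - 1 / 2 := fun u hu => by
    simpa using sawtooth_eq_of_mem_Ico (k := n) (by exact_mod_cast Ioo_subset_Ico_self hu)
  rw [integral_eq_sub_of_hasDerivAt_of_le (by linarith)
    (fun u hu => (hG u hu).continuousAt.continuousWithinAt)
    (fun u hu => by simpa only [hsaw u hu] using hG u (Ioo_subset_Icc_self hu))
    (intervalIntegrable_sawtooth_div (by linarith) (by linarith))]
  ring

lemma integral_sawtooth_div_nat {c : ℝ} (hc : 0 < c) (n : ℕ) :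
    ∫ u in (0 : ℝ)..n, sawtooth u / (u + c)
      = ∑ j ∈ Finset.range (n + 1), log (c + j) - (log c + log (c + n)) / 2
        - ((c + n) * log (c + n) - n - c * log c) := by
  induction n with
  | zero => simp
  | succ n ih =>
    have hcn : 0 < c + n := by positivity
    rw [Nat.cast_succ, ← integral_add_adjacent_intervals
      (intervalIntegrable_sawtooth_div (a := 0) (b := n) (by linarith) (by linarith))
      (intervalIntegrable_sawtooth_div (a := n) (b := n + 1) (by linarith) (by linarith)),
      ih, integral_sawtooth_div_unit hcn, Finset.sum_range_succ _ (n + 1)]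
    push_cast
    ring

lemma sawtoothPrimitive_zero : sawtoothPrimitive 0 = 0 := by
  simp [sawtoothPrimitive]

lemma continuous_sawtoothPrimitive : Continuous sawtoothPrimitive :=
  ContinuousOn.comp_fract'' (f := fun x : ℝ => (x ^ 2 - x) / 2) (by fun_prop) (by norm_num)

lemma abs_sawtoothPrimitive_le (u : ℝ) : |sawtoothPrimitive u| ≤ 1 / 8 := by
  have h0 := Int.fract_nonneg u
  have h1 := Int.fract_lt_one u
  rw [sawtoothPrimitive, abs_le]
  constructor <;> nlinarith [sq_nonneg (Int.fract u - 1 / 2)]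

lemma hasDerivWithinAt_sawtoothPrimitive (u : ℝ) :
    HasDerivWithinAt sawtoothPrimitive (sawtooth u) (Ici u) u := by
  have hu : u ∈ Ico (⌊u⌋ : ℝ) (⌊u⌋ + 1) := ⟨Int.floor_le u, Int.lt_floor_add_one u⟩
  have hpoly : HasDerivAt (fun t : ℝ => ((t - ⌊u⌋) ^ 2 - (t - ⌊u⌋)) / 2) (sawtooth u) u := by
    refine ((((hasDerivAt_id' u).sub_const _).pow 2).sub
      ((hasDerivAt_id' u).sub_const _)).div_const 2 |>.congr_deriv ?_
    rw [sawtooth_eq_of_mem_Ico hu]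
    ring
  refine hpoly.hasDerivWithinAt.congr_of_eventuallyEq ?_ ?_
  · filter_upwards [Ico_mem_nhdsGE hu.2] with t ht
    rw [sawtoothPrimitive, fract_eq_sub_of_mem_Ico ⟨hu.1.trans ht.1, ht.2⟩]
  · rw [sawtoothPrimitive, fract_eq_sub_of_mem_Ico hu]

lemma integral_sawtooth_div_by_parts {c T : ℝ} (hc : 0 < c) (hT : 0 ≤ T) :
    ∫ u in (0 : ℝ)..T, sawtooth u / (u + c)
      = sawtoothPrimitive T / (T + c) + ∫ u in (0 : ℝ)..T, sawtoothPrimitive u / (u + c) ^ 2 := by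
  have hpos : ∀ u ∈ Icc 0 T, 0 < u + c := fun u hu => by linarith [hu.1]
  have hcont : ContinuousOn (fun u => sawtoothPrimitive u / (u + c)) (Icc 0 T) :=
    continuous_sawtoothPrimitive.continuousOn.div (by fun_prop) fun u hu => (hpos u hu).ne'
  have hcont' : ContinuousOn (fun u => sawtoothPrimitive u / (u + c) ^ 2) (Icc 0 T) :=
    continuous_sawtoothPrimitive.continuousOn.div (by fun_prop) fun u hu => by
      have := hpos u hu; positivity
  have hderiv : ∀ u ∈ Ioo 0 T, HasDerivWithinAt (fun u => sawtoothPrimitive u / (u + c))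
      (sawtooth u / (u + c) - sawtoothPrimitive u / (u + c) ^ 2) (Ioi u) u := fun u hu => by
    have hu := hpos u (Ioo_subset_Icc_self hu)
    refine (((hasDerivWithinAt_sawtoothPrimitive u).mono Ioi_subset_Ici_self).div
      ((hasDerivAt_id' u).add_const c).hasDerivWithinAt hu.ne').congr_deriv ?_
    field_simp
  have hint := intervalIntegrable_sawtooth_div (a := 0) (b := T) (c := c) (by linarith) (by linarith)
  have hint' := hcont'.intervalIntegrable_of_Icc (μ := volume) hT
  have key := integral_eq_sub_of_hasDeriv_right_of_le hT hcont hderiv (hint.sub hint')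
  rw [integral_sub hint hint', sawtoothPrimitive_zero, zero_div, sub_zero] at key
  linarith

lemma integrableOn_sawtoothPrimitive_div_sq {c : ℝ} (hc : 0 < c) :
    IntegrableOn (fun u => sawtoothPrimitive u / (u + c) ^ 2) (Ioi 0) := by
  have hmaj : IntegrableOn (fun u : ℝ => ((u + c) ^ 2)⁻¹) (Ioi 0) := by
    refine integrableOn_Ioi_deriv_of_nonneg' (g := fun u => -(u + c)⁻¹) (l := 0)
      (fun u hu => ?_) (fun u _ => by positivity) ?_
    · have hu : u + c ≠ 0 := by linarith [mem_Ici.1 hu]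
      refine (((hasDerivAt_id' u).add_const c).inv hu).neg.congr_deriv ?_
      ring
    · simpa using (tendsto_atTop_add_const_right atTop c tendsto_id).inv_tendsto_atTop.neg
  refine (hmaj.const_mul (1 / 8)).mono'
    (continuous_sawtoothPrimitive.measurable.div (by fun_prop)).aestronglyMeasurable
    (ae_restrict_of_forall_mem measurableSet_Ioi fun u hu => ?_)
  have hu : 0 < (u + c) ^ 2 := by
    have : 0 < u + c := by linarith [mem_Ioi.1 hu]
    positivity
  rw [norm_div, norm_of_nonneg hu.le, ← div_eq_mul_inv]
  exact div_le_div_of_nonneg_right (abs_sawtoothPrimitive_le u) hu.le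

theorem tendsto_integral_sawtooth_div {c : ℝ} (hc : 0 < c) :
    Tendsto (fun T => ∫ u in (0 : ℝ)..T, sawtooth u / (u + c)) atTop
      (𝓝 (∫ u in Ioi 0, sawtoothPrimitive u / (u + c) ^ 2)) := by
  have hboundary : Tendsto (fun T => sawtoothPrimitive T / (T + c)) atTop (𝓝 0) := by
    have hinv : Tendsto (fun T : ℝ => (T + c)⁻¹) atTop (𝓝 0) :=
      (tendsto_atTop_add_const_right atTop c tendsto_id).inv_tendsto_atTop
    simpa only [div_eq_mul_inv] using
      bdd_le_mul_tendsto_zero' (1 / 8) (Eventually.of_forall abs_sawtoothPrimitive_le) hinv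
  have hbulk := intervalIntegral_tendsto_integral_Ioi 0
    (integrableOn_sawtoothPrimitive_div_sq hc) tendsto_id
  simpa using (hboundary.add hbulk).congr' <|
    (eventually_ge_atTop 0).mono fun T hT => (integral_sawtooth_div_by_parts hc hT).symm

lemma integral_one_sawtooth_div_eq (T : ℝ) :
    ∫ u in (1 : ℝ)..T, sawtooth u / u = ∫ u in (0 : ℝ)..T - 1, sawtooth u / (u + 1) := by
  calc ∫ u in (1 : ℝ)..T, sawtooth u / u
      = ∫ u in (0 : ℝ)..T - 1, sawtooth (u + 1) / (u + 1) := by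
        rw [integral_comp_add_right (fun u => sawtooth u / u)]
        norm_num
    _ = ∫ u in (0 : ℝ)..T - 1, sawtooth u / (u + 1) := by simp only [sawtooth_add_one]

lemma logGammaSeq_eq_integral_sawtooth {α : ℝ} (hα : 0 < α) {n : ℕ} (hn : n ≠ 0) :
    BohrMollerup.logGammaSeq α n
      = (∫ u in (0 : ℝ)..n, sawtooth u / (u + 1)) - (∫ u in (0 : ℝ)..n, sawtooth u / (u + α))
        + (α - 1 / 2) * log α
        + ((n + 1 / 2) * log (1 + 1 / n) - (n + (α + 1 / 2)) * log (1 + α / n)) := by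
  have hn' : (0 : ℝ) < n := by positivity
  have hfact : log (n.factorial : ℝ) = ∑ j ∈ Finset.range n, log (1 + j) := by
    rw [← Finset.prod_range_add_one_eq_factorial, Nat.cast_prod,
      log_prod fun j _ => by positivity]
    push_cast
    simp only [add_comm]
  have hlog : ∀ {c : ℝ}, 0 < c → log (1 + c / n) = log (c + n) - log n := fun hc => by
    rw [← log_div (by positivity) hn'.ne']
    congr 1
    field_simp
    ring
  rw [BohrMollerup.logGammaSeq, integral_sawtooth_div_nat one_pos,
    integral_sawtooth_div_nat hα, hfact, hlog one_pos, hlog hα, log_one]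
  simp only [Finset.sum_range_succ]
  ring

lemma tendsto_add_mul_log_one_add_div (b c : ℝ) :
    Tendsto (fun x => (x + b) * log (1 + c / x)) atTop (𝓝 c) := by
  have hlog : Tendsto (fun x => log (1 + c / x)) atTop (𝓝 0) := by
    have : Tendsto (fun x : ℝ => 1 + c / x) atTop (𝓝 1) := by
      simpa using tendsto_const_nhds.add ((tendsto_const_nhds (x := c)).div_atTop tendsto_id)
    simpa using this.log one_ne_zero
  simpa [add_mul] using (tendsto_mul_log_one_add_div_atTop c).add (hlog.const_mul b)

theorem log_gamma_stirling (α : ℝ) (hα : 0 < α) :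
    ∃ I J : ℝ,
      Tendsto (fun T : ℝ => ∫ u in (1 : ℝ)..T, (u - ⌊u⌋ - 1 / 2) / u) atTop (𝓝 I) ∧
      Tendsto (fun T : ℝ => ∫ u in (0 : ℝ)..T, (u - ⌊u⌋ - 1 / 2) / (u + α)) atTop (𝓝 J) ∧
      Real.log (Real.Gamma α) = (α - 1 / 2) * Real.log α - α + 1 + I - J := by
  have hI := tendsto_integral_sawtooth_div one_pos
  have hJ := tendsto_integral_sawtooth_div hα
  have hI' : Tendsto (fun T => ∫ u in (1 : ℝ)..T, sawtooth u / u) atTop (𝓝 _) :=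
    (hI.comp (tendsto_atTop_add_const_right atTop (-1) tendsto_id)).congr fun T => by
      simp [integral_one_sawtooth_div_eq, sub_eq_add_neg]
  refine ⟨_, _, hI', hJ, ?_⟩
  have hn := tendsto_natCast_atTop_atTop (R := ℝ)
  have hlim := (((hI.comp hn).sub (hJ.comp hn)).add_const ((α - 1 / 2) * log α)).add
    (((tendsto_add_mul_log_one_add_div (1 / 2) 1).comp hn).sub
      ((tendsto_add_mul_log_one_add_div (α + 1 / 2) α).comp hn))
  have hGamma := tendsto_nhds_unique (BohrMollerup.tendsto_log_gamma hα) <| hlim.congr' <|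
    (eventually_ne_atTop 0).mono fun n hn => (logGammaSeq_eq_integral_sawtooth hα hn).symm
  rw [hGamma]
  ring
end

section
/- For every real α with 0 < α < 1, ζ'(0, α) + ζ'(0, 1-α) = -log(2·sin(πα)), where ζ'(0, α) denotes the s-derivative of the Hurwitz zeta function at s = 0. -/
/-!
Since `ζ(s, a) + ζ(s, 1 - a) = 2 ζₑ(s, a)` with `ζₑ` the even Hurwitz zeta function, and the
functional equation `ζₑ(1 - s, a) = 2 (2π)^(-s) Γ(s) cos(πs/2) C(s, a)`, where
`C(s, a) = ∑ cos(2πna) n^(-s)`, has a factor `cos(πs/2)` vanishing at `s = 1`, the derivative of the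
left side at `s = 0` is `C(1, a)`.

The coefficients `e^(2πina)` of the Dirichlet series of `expZeta a` have bounded partial sums, so by
Abel summation the series converges on `Re s > 0` to a holomorphic function, which is `expZeta a s`
by the identity theorem. At `s = 1` Abel's limit theorem sums it to `-log(1 - e^(2πia))`, and the
real part gives `C(1, a) = -log |1 - e^(2πia)| = -log (2 sin πa)`.
-/

open Complex HurwitzZeta

/-- Hurwitz zeta function `ζ(s, α)` for real `α > 0`, via Mathlib's `hurwitzZeta` on the
unit circle: writing `α = β + m` with `β ∈ (0,1]` and `m = ⌈α⌉ - 1 ≥ 0`, we have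
`ζ(s, α) = ζ(s, β) - ∑_{k<m} (β + k)^{-s}`. -/
noncomputable def hzeta (s : ℂ) (α : ℝ) : ℂ :=
  hurwitzZeta (↑(α - (⌈α⌉ - 1 : ℤ)) : UnitAddCircle) s -
    ∑ k ∈ Finset.range (⌈α⌉ - 1).toNat, ((α - (⌈α⌉ - 1 : ℤ) + k : ℝ) : ℂ) ^ (-s)

open Filter Topology Finset
open scoped Real

theorem sum_range_mul_eq_add_sum_partialSum_mul_sub (c b : ℕ → ℂ) (N : ℕ) :
    ∑ n ∈ range N, c n * b n = (∑ k ∈ range N, c k) * b N +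
      ∑ n ∈ range N, (∑ k ∈ range (n + 1), c k) * (b n - b (n + 1)) := by
  induction N with
  | zero => simp
  | succ N ih =>
    rw [sum_range_succ, ih, sum_range_succ (fun n => _ * (b n - b (n + 1))), sum_range_succ c]
    ring

theorem norm_ofReal_cpow_neg_sub_le {x y : ℝ} (hx : 0 < x) (hxy : x ≤ y) {s : ℂ}
    (hs : -1 ≤ s.re) :
    ‖(x : ℂ) ^ (-s) - (y : ℂ) ^ (-s)‖ ≤ ‖s‖ * x ^ (-s.re - 1) * (y - x) := by
  have hderiv : ∀ t ∈ Set.Icc x y, HasDerivWithinAt (fun t : ℝ => (t : ℂ) ^ (-s))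
      (-s * (t : ℂ) ^ (-s - 1)) (Set.Icc x y) t := fun t ht =>
    ((hasDerivAt_id (t : ℂ)).cpow_const (c := -s)
      (Or.inl (by exact_mod_cast hx.trans_le ht.1))).comp_ofReal.hasDerivWithinAt
      |>.congr_deriv (by simp)
  have hbound : ∀ t ∈ Set.Ico x y, ‖-s * (t : ℂ) ^ (-s - 1)‖ ≤ ‖s‖ * x ^ (-s.re - 1) := by
    intro t ht
    rw [norm_mul, norm_neg, norm_cpow_eq_rpow_re_of_pos (hx.trans_le ht.1)]
    simp only [sub_re, neg_re, one_re]
    exact mul_le_mul_of_nonneg_left (Real.rpow_le_rpow_of_nonpos hx ht.1 (by linarith))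
      (norm_nonneg s)
  rw [norm_sub_rev]
  exact norm_image_sub_le_of_norm_deriv_le_segment' hderiv hbound y (Set.right_mem_Icc.2 hxy)

theorem summable_natCast_add_one_rpow {p : ℝ} (hp : p < -1) :
    Summable fun n : ℕ => ((n : ℝ) + 1) ^ p := by
  simpa using (summable_nat_add_iff 1).2 (Real.summable_nat_rpow.2 hp)

/-- The `n`-th term of `∑ c n (n + 1) ^ (-s)` after summation by parts. -/
noncomputable def abelTerm (c : ℕ → ℂ) (s : ℂ) (n : ℕ) : ℂ :=
  (∑ k ∈ range (n + 1), c k) * (((n : ℂ) + 1) ^ (-s) - ((n : ℂ) + 2) ^ (-s))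

section DirichletTest

variable {c : ℕ → ℂ} {B : ℝ}

theorem norm_abelTerm_le (hc : ∀ N, ‖∑ k ∈ range N, c k‖ ≤ B) {s : ℂ} (hs : -1 ≤ s.re)
    (n : ℕ) : ‖abelTerm c s n‖ ≤ B * ‖s‖ * ((n : ℝ) + 1) ^ (-s.re - 1) := by
  have h := norm_ofReal_cpow_neg_sub_le (x := (n : ℝ) + 1) (y := (n : ℝ) + 2) (by positivity)
    (by linarith) hs
  rw [add_sub_add_left_eq_sub, show (2 : ℝ) - 1 = 1 by norm_num, mul_one] at h
  push_cast at h
  rw [abelTerm, norm_mul, mul_assoc]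
  gcongr
  · exact (norm_nonneg _).trans (hc 0)
  · exact hc _

theorem summable_abelTerm (hc : ∀ N, ‖∑ k ∈ range N, c k‖ ≤ B) {s : ℂ} (hs : 0 < s.re) :
    Summable (abelTerm c s) :=
  .of_norm_bounded ((summable_natCast_add_one_rpow (by linarith)).mul_left _)
    (norm_abelTerm_le hc (by linarith))

theorem tendsto_sum_range_mul_cpow_neg (hc : ∀ N, ‖∑ k ∈ range N, c k‖ ≤ B) {s : ℂ}
    (hs : 0 < s.re) :
    Tendsto (fun N => ∑ n ∈ range N, c n * ((n : ℂ) + 1) ^ (-s)) atTop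
      (𝓝 (∑' n, abelTerm c s n)) := by
  have hboundary : Tendsto (fun N => (∑ k ∈ range N, c k) * ((N : ℂ) + 1) ^ (-s)) atTop (𝓝 0) := by
    refine squeeze_zero_norm (a := fun N : ℕ => B * ((N : ℝ) + 1) ^ (-s.re)) (fun N => ?_) ?_
    · rw [norm_mul]
      have hnorm : ‖((N : ℂ) + 1) ^ (-s)‖ = ((N : ℝ) + 1) ^ (-s.re) := by
        exact_mod_cast norm_cpow_eq_rpow_re_of_pos (by positivity : (0 : ℝ) < N + 1) (-s)
      rw [hnorm]
      gcongr
      exact hc N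
    · simpa using ((tendsto_rpow_neg_atTop hs).comp
        (tendsto_atTop_add_const_right atTop 1 tendsto_natCast_atTop_atTop)).const_mul B
  have hlim := hboundary.add (summable_abelTerm hc hs).hasSum.tendsto_sum_nat
  rw [zero_add] at hlim
  refine hlim.congr fun N => ?_
  rw [sum_range_mul_eq_add_sum_partialSum_mul_sub (b := fun n : ℕ => ((n : ℂ) + 1) ^ (-s))]
  congr 1
  refine sum_congr rfl fun n _ => ?_
  rw [abelTerm]
  push_cast
  ring_nf

theorem differentiableOn_tsum_abelTerm (hc : ∀ N, ‖∑ k ∈ range N, c k‖ ≤ B) :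
    DifferentiableOn ℂ (fun s => ∑' n, abelTerm c s n) {s | 0 < s.re} := by
  intro s₀ (hs₀ : 0 < s₀.re)
  let U : Set ℂ := {s | s₀.re / 2 < s.re ∧ ‖s‖ < ‖s₀‖ + 1}
  have hU : IsOpen U :=
    (isOpen_lt continuous_const continuous_re).inter (isOpen_lt continuous_norm continuous_const)
  have hs₀U : s₀ ∈ U := ⟨by linarith, by simp⟩
  refine (DifferentiableOn.differentiableAt ?_ (hU.mem_nhds hs₀U)).differentiableWithinAt
  refine differentiableOn_tsum_of_summable_norm
    (u := fun n => B * (‖s₀‖ + 1) * ((n : ℝ) + 1) ^ (-(s₀.re / 2) - 1)) ?_ ?_ hU ?_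
  · exact (summable_natCast_add_one_rpow (by linarith)).mul_left _
  · intro n
    have hcpow {x : ℂ} (hx : x ≠ 0) : Differentiable ℂ fun s : ℂ => x ^ (-s) :=
      differentiable_neg.const_cpow (Or.inl hx)
    exact (((hcpow (by norm_cast)).sub (hcpow (by norm_cast))).const_mul _).differentiableOn
  · rintro n w ⟨hw_re, hw_norm⟩
    have hB : 0 ≤ B := (norm_nonneg _).trans (hc 0)
    calc ‖abelTerm c w n‖ ≤ B * ‖w‖ * ((n : ℝ) + 1) ^ (-w.re - 1) :=
          norm_abelTerm_le hc (by linarith) n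
      _ ≤ B * (‖s₀‖ + 1) * ((n : ℝ) + 1) ^ (-(s₀.re / 2) - 1) := by
          gcongr
          linarith

end DirichletTest

theorem norm_sum_range_pow_succ_le {z : ℂ} (hz : ‖z‖ ≤ 1) (hz1 : z ≠ 1) (N : ℕ) :
    ‖∑ k ∈ range N, z ^ (k + 1)‖ ≤ 2 / ‖1 - z‖ := by
  have hgeom : ∑ k ∈ range N, z ^ (k + 1) = z * ((z ^ N - 1) / (z - 1)) := by
    rw [← geom_sum_eq hz1, mul_sum]
    simp only [pow_succ']
  have hnum : ‖z‖ * ‖z ^ N - 1‖ ≤ 2 := by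
    calc ‖z‖ * ‖z ^ N - 1‖ ≤ 1 * (1 + 1) := by
          gcongr
          refine (norm_sub_le _ _).trans ?_
          rw [norm_pow, norm_one]
          gcongr
          exact pow_le_one₀ (norm_nonneg z) hz
      _ = 2 := by norm_num
  rw [hgeom, norm_mul, norm_div, norm_sub_rev z, ← mul_div_assoc]
  gcongr

theorem one_sub_mem_slitPlane {z : ℂ} (hz : ‖z‖ ≤ 1) (hz1 : z ≠ 1) : 1 - z ∈ slitPlane := by
  rw [mem_slitPlane_iff, sub_re, one_re, sub_pos]
  left
  by_contra! hre
  have hnorm : |z.re| = ‖z‖ :=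
    le_antisymm (abs_re_le_norm z) (hz.trans (hre.trans (le_abs_self _)))
  refine hz1 (Complex.ext ?_ (by simpa using abs_re_eq_norm.1 hnorm))
  linarith [re_le_norm z, one_re]

theorem norm_exp_two_pi_I_mul (a : ℝ) : ‖cexp (2 * π * I * a)‖ = 1 := by
  rw [norm_exp]; simp

theorem exp_two_pi_I_mul_ne_one {a : ℝ} (ha : (a : UnitAddCircle) ≠ 0) :
    cexp (2 * π * I * a) ≠ 1 := by
  rw [Ne, exp_eq_one_iff]
  rintro ⟨n, hn⟩
  refine ha ((AddCircle.coe_eq_zero_iff 1).2 ⟨n, ?_⟩)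
  have : (a : ℂ) = n := by
    apply mul_left_cancel₀ (by simp [Real.pi_ne_zero] : 2 * (π : ℂ) * I ≠ 0)
    rw [hn]; ring
  simp only [zsmul_eq_mul, mul_one]
  exact_mod_cast this.symm

theorem eq_neg_log_one_sub_of_tendsto {z L : ℂ} (hz : ‖z‖ ≤ 1) (hz1 : z ≠ 1)
    (h : Tendsto (fun N => ∑ n ∈ range N, z ^ n / n) atTop (𝓝 L)) : L = -log (1 - z) := by
  have hmap : Tendsto ofReal (𝓝[<] (1 : ℝ)) (𝓝 1) := by
    simpa using (continuous_ofReal.tendsto 1).mono_left nhdsWithin_le_nhds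
  have hlog : Tendsto (fun x : ℂ => -log (1 - x * z)) ((𝓝[<] 1).map ofReal)
      (𝓝 (-log (1 - z))) := by
    have hcont : ContinuousAt (fun x : ℂ => -log (1 - x * z)) 1 :=
      ((continuousAt_clog (by simpa using one_sub_mem_slitPlane hz hz1)).comp
        (by fun_prop)).neg
    simpa using hcont.tendsto.mono_left hmap
  have hseries : (fun x : ℂ => ∑' n : ℕ, z ^ n / n * x ^ n) =ᶠ[(𝓝[<] 1).map ofReal]
      fun x => -log (1 - x * z) := by
    rw [EventuallyEq, eventually_map]
    filter_upwards [Ioo_mem_nhdsLT (zero_lt_one' ℝ)] with x hx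
    have hxz : ‖(x : ℂ) * z‖ < 1 := by
      rw [norm_mul, norm_real, Real.norm_of_nonneg hx.1.le]
      nlinarith [norm_nonneg z, hx.1, hx.2]
    rw [← (hasSum_taylorSeries_neg_log hxz).tsum_eq]
    congr 1 with n
    ring
  exact tendsto_nhds_unique ((tendsto_tsum_powerSeries_nhdsWithin_lt h).congr' hseries) hlog

theorem tendsto_sum_range_expZeta {a : ℝ} (ha : (a : UnitAddCircle) ≠ 0) {s : ℂ}
    (hs : 0 < s.re) :
    Tendsto (fun N => ∑ n ∈ range N, cexp (2 * π * I * a * n) / (n : ℂ) ^ s) atTop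
      (𝓝 (expZeta a s)) := by
  set z := cexp (2 * π * I * a)
  have hc := norm_sum_range_pow_succ_le (norm_exp_two_pi_I_mul a).le (exp_two_pi_I_mul_ne_one ha)
  have hshift {s : ℂ} (hs : 0 < s.re) {L : ℂ} :
      Tendsto (fun N => ∑ n ∈ range N, z ^ (n + 1) * ((n : ℂ) + 1) ^ (-s)) atTop (𝓝 L) →
      Tendsto (fun N => ∑ n ∈ range N, cexp (2 * π * I * a * n) / (n : ℂ) ^ s) atTop (𝓝 L) := by
    intro h
    rw [← tendsto_add_atTop_iff_nat 1]
    refine h.congr fun N => ?_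
    rw [sum_range_succ', Nat.cast_zero, zero_cpow (ne_of_apply_ne re hs.ne'), div_zero, add_zero]
    refine sum_congr rfl fun n _ => ?_
    rw [← exp_nat_mul, cpow_neg, ← div_eq_mul_inv]
    push_cast
    ring_nf
  have hhalf : IsOpen {s : ℂ | 0 < s.re} := isOpen_lt continuous_const continuous_re
  have hF := differentiableOn_tsum_abelTerm hc
  have hE : Set.EqOn (fun s => ∑' n, abelTerm (fun n => z ^ (n + 1)) s n) (expZeta a)
      {s | 0 < s.re} := by
    refine (hF.analyticOnNhd hhalf).eqOn_of_preconnected_of_eventuallyEq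
      ((differentiable_expZeta_of_ne_zero ha).differentiableOn.analyticOnNhd hhalf)
      (convex_halfSpace_re_gt 0).isPreconnected (z₀ := 2) (by simp) ?_
    filter_upwards [(isOpen_lt continuous_const continuous_re).mem_nhds
      (show (1 : ℝ) < (2 : ℂ).re by simp)] with s hs
    exact tendsto_nhds_unique
      (hshift (by linarith) (tendsto_sum_range_mul_cpow_neg hc (by linarith)))
      (hasSum_expZeta_of_one_lt_re a hs).tendsto_sum_nat
  exact hshift hs (hE hs ▸ tendsto_sum_range_mul_cpow_neg hc hs)

theorem expZeta_one {a : ℝ} (ha : (a : UnitAddCircle) ≠ 0) :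
    expZeta a 1 = -log (1 - cexp (2 * π * I * a)) := by
  refine eq_neg_log_one_sub_of_tendsto (norm_exp_two_pi_I_mul a).le
    (exp_two_pi_I_mul_ne_one ha) ?_
  simpa [← exp_nat_mul, mul_comm] using tendsto_sum_range_expZeta ha (s := 1) (by simp)

theorem cosZeta_one {a : ℝ} (ha : (a : UnitAddCircle) ≠ 0) :
    cosZeta a 1 = -Real.log (2 * Real.sin (π * a)) := by
  set z := cexp (2 * π * I * a)
  have hneg : -(a : UnitAddCircle) = ((-a : ℝ) : UnitAddCircle) := (AddCircle.coe_neg 1).symm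
  have hconj : cexp (2 * π * I * (-a : ℝ)) = starRingEnd ℂ z := by
    rw [← exp_conj, map_mul, map_mul, map_mul, conj_ofReal, conj_ofReal, conj_I, map_ofNat]
    push_cast
    ring_nf
  have harg : (1 - z).arg ≠ π := (mem_slitPlane_iff_arg.1
    (one_sub_mem_slitPlane (norm_exp_two_pi_I_mul a).le (exp_two_pi_I_mul_ne_one ha))).1
  have hnorm : ‖1 - z‖ = |2 * Real.sin (π * a)| := by
    rw [norm_sub_rev, ← Real.norm_eq_abs, show π * a = 2 * π * a / 2 by ring,
      ← norm_exp_I_mul_ofReal_sub_one]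
    congr 3
    simp only [z]
    push_cast
    ring_nf
  have hexp_neg : expZeta (-a) 1 = -log (starRingEnd ℂ (1 - z)) := by
    rw [hneg, expZeta_one (by rwa [← hneg, neg_ne_zero]), hconj, map_sub, map_one]
  rw [cosZeta_eq, expZeta_one ha, hexp_neg, log_conj _ harg, ← neg_add, add_conj, log_re, hnorm,
    Real.log_abs]
  push_cast
  ring

theorem hasDerivAt_hurwitzZetaEven_zero {a : UnitAddCircle} (ha : a ≠ 0) :
    HasDerivAt (hurwitzZetaEven a) (cosZeta a 1 / 2) 0 := by
  let G : ℂ → ℂ := fun s => 2 * (2 * π) ^ (-s) * Gamma s * cosZeta a s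
  have hG : DifferentiableAt ℂ G 1 := by
    refine (((differentiable_neg.const_cpow (Or.inl ?_)).const_mul 2 1).mul
      (differentiableAt_Gamma _ fun m h => ?_)).mul (differentiableAt_cosZeta a (Or.inr ha))
    · exact mul_ne_zero two_ne_zero (ofReal_ne_zero.2 Real.pi_ne_zero)
    · have := congrArg re h
      simp only [one_re, neg_re, natCast_re] at this
      linarith [(m.cast_nonneg : (0 : ℝ) ≤ m)]
  have hcos : HasDerivAt (fun s : ℂ => cos (π * s / 2)) (-(π / 2)) 1 := by
    have := ((hasDerivAt_id (1 : ℂ)).const_mul (π : ℂ) |>.div_const 2).ccos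
    simpa [Complex.sin_pi_div_two] using this
  have hfe : (fun s => hurwitzZetaEven a (1 - s)) =ᶠ[𝓝 1] fun s => G s * cos (π * s / 2) := by
    filter_upwards [(isOpen_lt continuous_const continuous_re).mem_nhds
      (show (0 : ℝ) < (1 : ℂ).re by simp)] with s hs
    have hs_ne (n : ℕ) : s ≠ -n := fun h => by
      simp only [h, neg_re, natCast_re, Left.neg_pos_iff] at hs
      linarith [(n.cast_nonneg : (0 : ℝ) ≤ n)]
    rw [hurwitzZetaEven_one_sub a hs_ne (Or.inl ha)]
    ring
  have hreflected : HasDerivAt (fun s => hurwitzZetaEven a (1 - s)) (-(cosZeta a 1 / 2)) 1 := by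
    refine (hG.hasDerivAt.mul hcos).congr_of_eventuallyEq hfe |>.congr_deriv ?_
    have hpi : (π : ℂ) ≠ 0 := ofReal_ne_zero.2 Real.pi_ne_zero
    simp only [G, mul_one, cos_pi_div_two, mul_zero, cpow_neg_one, Gamma_one, zero_add]
    field_simp
  have hcomp := HasDerivAt.comp_const_sub (1 : ℂ) 0 (by rwa [sub_zero])
  simpa using hcomp

theorem deriv_hurwitzZeta_add_deriv_hurwitzZeta_neg_zero {a : UnitAddCircle} (ha : a ≠ 0) :
    deriv (hurwitzZeta a) 0 + deriv (hurwitzZeta (-a)) 0 = cosZeta a 1 := by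
  have hsum : (fun s => hurwitzZeta a s + hurwitzZeta (-a) s) =
      fun s => 2 * hurwitzZetaEven a s := by
    ext s
    rw [hurwitzZetaEven_eq]
    ring
  rw [← deriv_fun_add (differentiableAt_hurwitzZeta a zero_ne_one)
    (differentiableAt_hurwitzZeta (-a) zero_ne_one), hsum,
    ((hasDerivAt_hurwitzZetaEven_zero ha).const_mul 2).deriv]
  ring

theorem hzeta_of_mem_Ioc {β : ℝ} (hβ : β ∈ Set.Ioc 0 1) (s : ℂ) :
    hzeta s β = hurwitzZeta β s := by
  have hceil : ⌈β⌉ = 1 := Int.ceil_eq_iff.2 (by simpa using hβ)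
  simp [hzeta, hceil]

theorem hzeta_deriv_zero_add (α : ℝ) (h0 : 0 < α) (h1 : α < 1) :
    deriv (fun s : ℂ => hzeta s α) 0 + deriv (fun s : ℂ => hzeta s (1 - α)) 0 =
      -(Real.log (2 * Real.sin (Real.pi * α)) : ℂ) := by
  have ha : (α : UnitAddCircle) ≠ 0 := by
    rw [Ne, AddCircle.coe_eq_zero_iff_of_mem_Ico ⟨h0.le, h1⟩]
    exact h0.ne'
  have hcoe : ((1 - α : ℝ) : UnitAddCircle) = -α := by
    rw [AddCircle.coe_sub, AddCircle.coe_period, zero_sub]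
  simp_rw [hzeta_of_mem_Ioc ⟨h0, h1.le⟩, hzeta_of_mem_Ioc ⟨sub_pos.2 h1, by linarith⟩, hcoe]
  exact (deriv_hurwitzZeta_add_deriv_hurwitzZeta_neg_zero ha).trans (cosZeta_one ha)
end

section
/- For every real α with 0 < α < 1 and every complex s with Re s < 0, ζ(s, α) = 2·(2π)^{s-1}·Γ(1-s)·Σ_{n≥1} sin(πs/2 + 2πnα)·n^{s-1} (the Hurwitz formula / functional equation for the Hurwitz zeta function). -/
open Complex HurwitzZeta

open scoped Real

/-!
Mathlib's functional equation `hurwitzZeta_one_sub` expresses `ζ(s, α)` through the periodic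
zeta functions `expZeta (±α) (1 - s)`, whose Dirichlet series converge since `Re (1 - s) > 1`.
Pairing the `n`-th terms of the two series, the phases `exp (∓ π i (1 - s) / 2)` combine with
`exp (± 2 π i n α)` into `2 sin (π s / 2 + 2 π n α)`.
-/

lemma hzeta_eq_hurwitzZeta {α : ℝ} (h0 : 0 < α) (h1 : α ≤ 1) (s : ℂ) :
    hzeta s α = hurwitzZeta α s := by
  have hceil : ⌈α⌉ = 1 := Int.ceil_eq_iff.2 ⟨by norm_num [h0], by exact_mod_cast h1⟩
  simp [hzeta, hceil]

lemma exp_mul_exp_add_exp_mul_exp_eq_two_mul_sin (s x : ℂ) :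
    cexp (-π * I * (1 - s) / 2) * cexp (2 * π * I * x) +
        cexp (π * I * (1 - s) / 2) * cexp (-(2 * π * I * x)) =
      2 * sin (π * s / 2 + 2 * π * x) := by
  rw [← exp_add, ← exp_add, ← cos_sub_pi_div_two, two_cos]
  congr 2 <;> ring

lemma hasSum_sin_mul_cpow (a : ℝ) {s : ℂ} (hs : s.re < 0) :
    HasSum (fun n : ℕ ↦ sin (π * s / 2 + 2 * π * (n + 1) * a) * ((n : ℂ) + 1) ^ (s - 1))
      ((cexp (-π * I * (1 - s) / 2) * expZeta a (1 - s) +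
        cexp (π * I * (1 - s) / 2) * expZeta (-a) (1 - s)) / 2) := by
  have hw : 1 < (1 - s).re := by rw [sub_re, one_re]; linarith
  have hsum := (((hasSum_expZeta_of_one_lt_re a hw).mul_left (cexp (-π * I * (1 - s) / 2))).add
    ((hasSum_expZeta_of_one_lt_re (-a) hw).mul_left (cexp (π * I * (1 - s) / 2)))).div_const 2
  rw [← hasSum_nat_add_iff' 1] at hsum
  have hw0 : 1 - s ≠ 0 := fun h ↦ by norm_num [h] at hw
  simp only [Finset.range_one, Finset.sum_singleton, CharP.cast_eq_zero, zero_cpow hw0, div_zero,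
    mul_zero, add_zero, zero_div, sub_zero, AddCircle.coe_neg] at hsum
  refine hsum.congr_fun fun n ↦ ?_
  have hsin := exp_mul_exp_add_exp_mul_exp_eq_two_mul_sin s ((n + 1) * a)
  rw [← mul_assoc, ← mul_assoc] at hsin
  push_cast
  rw [show s - 1 = -(1 - s) by ring, cpow_neg, ← mul_div_assoc, ← mul_div_assoc, ← add_div,
    show 2 * π * I * -(a : ℂ) * (n + 1) = -(2 * π * I * (n + 1) * a) by ring,
    show 2 * π * I * a * (n + 1) = 2 * π * I * (n + 1) * a by ring, hsin]
  ring

theorem hurwitz_formula (α : ℝ) (h0 : 0 < α) (h1 : α < 1) (s : ℂ) (hs : s.re < 0) :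
    ∃ S : ℂ,
      HasSum
        (fun n : ℕ =>
          Complex.sin ((Real.pi : ℂ) * s / 2 + 2 * (Real.pi : ℂ) * (n + 1) * α) *
            ((n : ℂ) + 1) ^ (s - 1)) S ∧
      hzeta s α = 2 * (2 * (Real.pi : ℂ)) ^ (s - 1) * Complex.Gamma (1 - s) * S := by
  refine ⟨_, hasSum_sin_mul_cpow α hs, ?_⟩
  have hw : ∀ n : ℕ, 1 - s ≠ -n := fun n h ↦ by
    have hre := congrArg re h
    simp only [sub_re, one_re, neg_re, natCast_re] at hre
    linarith [(n.cast_nonneg : (0 : ℝ) ≤ n)]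
  rw [hzeta_eq_hurwitzZeta h0 h1.le, ← sub_sub_cancel 1 s,
    hurwitzZeta_one_sub _ hw (Or.inr fun h ↦ by simp [sub_eq_self.mp h] at hs), sub_sub_cancel, neg_sub]
  ring
end
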